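/- There exist constants C, c > 0 depending only on α and C₀ such that for any j ≥ 1 with m_j ≤ n, with probability at least 1 − C exp(−c j²), one has inf_{s ≤ b_j} ( (1/2) c_{m_j} e^{m_j s} |ε_{m_j}| − Σ_{m_j < i ≤ n} |ε_i| c_i e^{i s} ) > 0. -/

import Mathlib

open MeasureTheory ProbabilityTheory Filter
open scoped Classical

noncomputable section

/-- `mseq α j = 2⌊j^(1/α)⌋`, the sequence `m_j` from the construction. -/
def mseq (α : ℝ) (j : ℕ) : ℕ := 2 * ⌊(j : ℝ) ^ (1 / α)⌋₊

/-- The index `j` of the block `I_j = (m_(j-1), m_j]` containing `k`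
(with the convention `m_(-1) = -1`). -/
def blockIdx (α : ℝ) (k : ℕ) : ℕ := sInf {j : ℕ | k ≤ mseq α j}

/-- The deterministic coefficient sequence: `c_k = exp (-2^j)` for `k ∈ I_j`. -/
def cseq (α : ℝ) (k : ℕ) : ℝ := Real.exp (-(2 : ℝ) ^ blockIdx α k)

/-- `j_* = max {j : I_j ∩ {0,…,n} ≠ ∅}`, the index of the block containing `n`. -/
def jStar (α : ℝ) (n : ℕ) : ℕ := blockIdx α n

/-- `β = min {1/2, (1-α)/(2α)}`. -/
def betaC (α : ℝ) : ℝ := min (1 / 2) ((1 - α) / (2 * α))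

/-- `a_j = α j^(1-1/α) 2^(j-2) (1 + j^(-β))`. -/
def aseq (α : ℝ) (j : ℕ) : ℝ :=
  α * (j : ℝ) ^ (1 - 1 / α) * (2 : ℝ) ^ ((j : ℤ) - 2) * (1 + (j : ℝ) ^ (-betaC α))

/-- `b_j = α j^(1-1/α) 2^(j-1) (1 - j^(-β))`. -/
def bseq (α : ℝ) (j : ℕ) : ℝ :=
  α * (j : ℝ) ^ (1 - 1 / α) * (2 : ℝ) ^ ((j : ℤ) - 1) * (1 - (j : ℝ) ^ (-betaC α))

/-- `φ_j(t) = c_(m_j) e^(t m_j)` with `c_(m_j) = exp (-2^j)`. -/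
def phi (α : ℝ) (j : ℕ) (t : ℝ) : ℝ := Real.exp (-(2 : ℝ) ^ j) * Real.exp (t * mseq α j)

/-- `g_n(t) = f_n(e^t) = ∑_{k=0}^n c_k ε_k e^{tk}`. -/
def gval (α : ℝ) {Ω : Type*} (ε : ℕ → Ω → ℝ) (n : ℕ) (ω : Ω) (t : ℝ) : ℝ :=
  ∑ k ∈ Finset.range (n + 1), cseq α k * ε k ω * Real.exp (t * k)

/-- `R_n`: the number of real roots of `f_n(z) = ∑_{k=0}^n c_k ε_k z^k`
(counted without multiplicity). -/
def Rroots (α : ℝ) {Ω : Type*} (ε : ℕ → Ω → ℝ) (n : ℕ) (ω : Ω) : ℕ :=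
  Set.ncard {t : ℝ | ∑ k ∈ Finset.range (n + 1), cseq α k * ε k ω * t ^ k = 0}

/-- `S_n`: the number of sign changes among `(ε_(m_0), …, ε_(m_(j_*-1)), ε_n)`. -/
def Schanges (α : ℝ) {Ω : Type*} (ε : ℕ → Ω → ℝ) (n : ℕ) (ω : Ω) : ℕ :=
  ((Finset.range (jStar α n)).filter fun j =>
    ε (mseq α j) ω * (if j + 1 < jStar α n then ε (mseq α (j + 1)) ω else ε n ω) < 0).card

/-!
On the event that `|ε_{m_j}| > 2 e^{-j²}` and the tail `X = ∑_{m_j < i ≤ n} |ε_i| c_i e^{i b_j}` is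
below `c_{m_j} e^{m_j b_j} e^{-j²}`, the inequality holds at `s = b_j`, hence for every `s ≤ b_j`
because all tail indices exceed `m_j`. Markov's inequality and the small-ball bound give the
complement probability at most `(1 + 2 C₀) e^{-j²}`, once `E X ≤ ∑ c_i e^{i b_j}` is at most
`c_{m_j} e^{m_j b_j} e^{-2j²}`.

That deterministic bound holds termwise with a geometric factor `e^{-(i - m_j)}` as soon as
`(m_J - m_j)(b_j + 1) + 2j² + 2^j ≤ 2^J` for every `J > j`. By induction on `J` it suffices to
check `J = j + 1`, where the margin `1 - j^{-β}` in `b_j` absorbs the error terms, and that the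
increments `(m_{J+1} - m_J)(b_j + 1) ≈ ((J+1)/j)^{1/α-1} 2^j` stay below `2^J`.
-/

open Finset

lemma exp_le_one_add_two_mul {x : ℝ} (h0 : 0 ≤ x) (h1 : x ≤ 1 / 2) : Real.exp x ≤ 1 + 2 * x := by
  refine (Real.exp_bound_div_one_sub_of_interval h0 (by linarith)).trans ?_
  rw [div_le_iff₀ (by linarith)]
  nlinarith

lemma one_add_rpow_le_exp_mul {x c : ℝ} (hx : 0 ≤ x) (hc : 0 ≤ c) :
    (1 + x) ^ c ≤ Real.exp (c * x) := by
  calc (1 + x) ^ c ≤ Real.exp x ^ c :=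
        Real.rpow_le_rpow (by linarith) (by linarith [Real.add_one_le_exp x]) hc
    _ = Real.exp (c * x) := by rw [← Real.exp_mul, mul_comm]

lemma div_rpow_le_exp_pow {x c : ℝ} (hx : 0 < x) (hc : 0 ≤ c) (k : ℕ) :
    ((x + k) / x) ^ c ≤ Real.exp (c / x) ^ k := by
  have hk : (x + k) / x = 1 + k / x := by field_simp
  rw [hk, ← Real.exp_nat_mul]
  exact (one_add_rpow_le_exp_mul (by positivity) hc).trans_eq (by ring_nf)

lemma rpow_sub_rpow_le_mul_sub {a b p : ℝ} (ha : 0 ≤ a) (hab : a ≤ b) (hp : 1 ≤ p) :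
    b ^ p - a ^ p ≤ p * b ^ (p - 1) * (b - a) := by
  rcases hab.eq_or_lt with rfl | hab
  · simp
  have hb : 0 < b := ha.trans_lt hab
  have hB := one_add_mul_self_le_rpow_one_add
    (show (-1 : ℝ) ≤ a / b - 1 by linarith [div_nonneg ha hb.le]) hp
  rw [add_sub_cancel, Real.div_rpow ha hb.le, le_div_iff₀ (by positivity)] at hB
  have key : (a / b - 1) * b ^ p = (a - b) * b ^ (p - 1) := by
    rw [Real.rpow_sub hb, Real.rpow_one]
    field_simp
  nlinarith [key]

lemma sum_Ioc_exp_neg_sub_le_one (m n : ℕ) :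
    ∑ i ∈ Ioc m n, Real.exp (-((i : ℝ) - m)) ≤ 1 := by
  have hexp : Real.exp (-1) ≤ 1 / 2 := by
    rw [Real.exp_neg, inv_le_comm₀ (Real.exp_pos 1) (by norm_num)]
    linarith [Real.add_one_le_exp 1]
  calc ∑ i ∈ Ioc m n, Real.exp (-((i : ℝ) - m))
      ≤ ∑ i ∈ Ioc m n, (1 / 2 : ℝ) ^ (i - m) := by
        refine sum_le_sum fun i hi => ?_
        rw [show -((i : ℝ) - m) = (i - m : ℕ) * (-1) by
          push_cast [(mem_Ioc.1 hi).1.le]; ring, Real.exp_nat_mul]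
        exact pow_le_pow_left₀ (Real.exp_pos _).le hexp _
    _ = (1 / 2) * ∑ k ∈ range (n - m), (1 / 2 : ℝ) ^ k := by
        rw [show Ioc m n = Ico (m + 1) (n + 1) by ext; simp only [mem_Ioc, mem_Ico]; omega,
          sum_Ico_eq_sum_range, mul_sum]
        refine sum_congr (by congr 1; omega) fun k _ => ?_
        rw [show m + 1 + k - m = k + 1 by omega, pow_succ']
    _ ≤ 1 := by linarith [sum_geometric_two_le (n - m)]

lemma sum_mul_exp_lt_of_le {S : Finset ℕ} {m : ℕ} (hS : ∀ i ∈ S, m ≤ i) {a : ℕ → ℝ}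
    (ha : ∀ i ∈ S, 0 ≤ a i) {A b s : ℝ} (h : ∑ i ∈ S, a i * Real.exp (i * b) < A * Real.exp (m * b))
    (hs : s ≤ b) : ∑ i ∈ S, a i * Real.exp (i * s) < A * Real.exp (m * s) := by
  have hshift : Real.exp (m * s) = Real.exp (m * b) * Real.exp (m * (s - b)) := by
    rw [← Real.exp_add]; ring_nf
  calc ∑ i ∈ S, a i * Real.exp (i * s)
      ≤ ∑ i ∈ S, a i * Real.exp (i * b) * Real.exp (m * (s - b)) := by
        refine sum_le_sum fun i hi => ?_
        rw [mul_assoc, ← Real.exp_add]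
        gcongr
        · exact ha i hi
        · nlinarith [(Nat.cast_le (α := ℝ)).2 (hS i hi)]
    _ < A * Real.exp (m * b) * Real.exp (m * (s - b)) := by
        rw [← sum_mul]; exact mul_lt_mul_of_pos_right h (Real.exp_pos _)
    _ = A * Real.exp (m * s) := by rw [hshift, mul_assoc]

lemma eventually_const_le_rpow (A : ℝ) {q : ℝ} (hq : 0 < q) :
    ∀ᶠ j : ℕ in atTop, A ≤ (j : ℝ) ^ q :=
  ((tendsto_rpow_atTop hq).comp tendsto_natCast_atTop_atTop).eventually_ge_atTop A

lemma eventually_mul_rpow_le_two_pow (A p : ℝ) {c : ℝ} (hc : 0 < c) :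
    ∀ᶠ j : ℕ in atTop, A * (j : ℝ) ^ p ≤ c * 2 ^ j := by
  have hM : 0 < max A 1 := lt_max_of_lt_right one_pos
  have h := (isLittleO_rpow_exp_pos_mul_atTop p (Real.log_pos one_lt_two)).bound
    (div_pos hc hM)
  filter_upwards [tendsto_natCast_atTop_atTop.eventually h] with j hj
  rw [Real.norm_of_nonneg (by positivity), Real.norm_of_nonneg (Real.exp_pos _).le,
    Real.exp_mul, Real.exp_log two_pos, Real.rpow_natCast] at hj
  calc A * (j : ℝ) ^ p ≤ max A 1 * (j : ℝ) ^ p := by gcongr; exact le_max_left _ _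
    _ ≤ max A 1 * (c / max A 1 * 2 ^ j) := by gcongr
    _ = c * 2 ^ j := by field_simp

section Blocks

variable {α : ℝ}

lemma mseq_strictMono (hα0 : 0 < α) (hα1 : α ≤ 1) : StrictMono (mseq α) := by
  refine strictMono_nat_of_lt_succ fun j => ?_
  have hsucc : (j : ℝ) ^ (1 / α) + 1 ≤ ((j : ℝ) + 1) ^ (1 / α) := by
    simpa using Real.add_rpow_le_rpow_add (Nat.cast_nonneg j) zero_le_one (one_le_one_div hα0 hα1)
  have hfloor : ⌊(j : ℝ) ^ (1 / α)⌋₊ + 1 ≤ ⌊((j + 1 : ℕ) : ℝ) ^ (1 / α)⌋₊ :=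
    Nat.le_floor (by push_cast; linarith [Nat.floor_le (by positivity : (0 : ℝ) ≤ j ^ (1 / α))])
  simp only [mseq]
  omega

lemma le_mseq_blockIdx (hα0 : 0 < α) (hα1 : α ≤ 1) (k : ℕ) : k ≤ mseq α (blockIdx α k) :=
  Nat.sInf_mem (s := {j | k ≤ mseq α j}) ⟨k, (mseq_strictMono hα0 hα1).id_le k⟩

lemma lt_blockIdx (hα0 : 0 < α) (hα1 : α ≤ 1) {j k : ℕ} (h : mseq α j < k) : j < blockIdx α k :=
  (mseq_strictMono hα0 hα1).lt_iff_lt.1 (h.trans_le (le_mseq_blockIdx hα0 hα1 k))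

lemma blockIdx_mseq (hα0 : 0 < α) (hα1 : α ≤ 1) (j : ℕ) : blockIdx α (mseq α j) = j :=
  le_antisymm (Nat.sInf_le (s := {i | mseq α j ≤ mseq α i}) (le_refl (mseq α j)))
    ((mseq_strictMono hα0 hα1).le_iff_le.1 (le_mseq_blockIdx hα0 hα1 _))

lemma cseq_pos (k : ℕ) : 0 < cseq α k := Real.exp_pos _

lemma cseq_mseq (hα0 : 0 < α) (hα1 : α ≤ 1) (j : ℕ) : cseq α (mseq α j) = Real.exp (-2 ^ j) := by
  rw [cseq, blockIdx_mseq hα0 hα1]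

lemma mseq_succ_sub_lt (hα0 : 0 < α) (hα1 : α ≤ 1) (J : ℕ) :
    (mseq α (J + 1) : ℝ) - mseq α J < 2 * (1 / α) * ((J : ℝ) + 1) ^ (1 / α - 1) + 2 := by
  have hmvt := rpow_sub_rpow_le_mul_sub (Nat.cast_nonneg J) (le_add_of_nonneg_right zero_le_one)
    (one_le_one_div hα0 hα1)
  have hup := Nat.floor_le (by positivity : (0 : ℝ) ≤ ((J + 1 : ℕ) : ℝ) ^ (1 / α))
  have hlow := Nat.lt_floor_add_one ((J : ℝ) ^ (1 / α))
  simp only [mseq]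
  push_cast at hup ⊢
  linarith

end Blocks

section Margin

variable {α : ℝ}

lemma betaC_pos (hα : α ∈ Set.Ioo (0 : ℝ) 1) : 0 < betaC α :=
  lt_min (by norm_num) (div_pos (by linarith [hα.2]) (by linarith [hα.1]))

lemma betaC_le_half : betaC α ≤ 1 / 2 := min_le_left _ _

lemma betaC_le (hα : α ∈ Set.Ioo (0 : ℝ) 1) : betaC α ≤ (1 / α - 1) / 2 :=
  (min_le_right _ _).trans_eq (by field_simp [hα.1.ne'])

lemma two_mul_bseq (j : ℕ) :
    2 * bseq α j = α * (j : ℝ) ^ (1 - 1 / α) * 2 ^ j * (1 - (j : ℝ) ^ (-betaC α)) := by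
  rw [bseq, zpow_sub₀ two_ne_zero, zpow_natCast, zpow_one]
  ring

lemma rpow_neg_betaC_le_one (hα : α ∈ Set.Ioo (0 : ℝ) 1) {j : ℕ} (hj : 1 ≤ j) :
    (j : ℝ) ^ (-betaC α) ≤ 1 :=
  Real.rpow_le_one_of_one_le_of_nonpos (by exact_mod_cast hj) (by linarith [betaC_pos hα])

lemma two_mul_bseq_le (hα : α ∈ Set.Ioo (0 : ℝ) 1) {j : ℕ} (hj : 1 ≤ j) :
    2 * bseq α j ≤ α * (j : ℝ) ^ (1 - 1 / α) * 2 ^ j := by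
  rw [two_mul_bseq]
  have := hα.1
  exact mul_le_of_le_one_right (by positivity)
    (by linarith [Real.rpow_nonneg (Nat.cast_nonneg j) (-betaC α)])

lemma bseq_nonneg (hα : α ∈ Set.Ioo (0 : ℝ) 1) {j : ℕ} (hj : 1 ≤ j) : 0 ≤ bseq α j := by
  have h := two_mul_bseq (α := α) j
  have := hα.1
  have : 0 ≤ 1 - (j : ℝ) ^ (-betaC α) := by linarith [rpow_neg_betaC_le_one hα hj]
  have : 0 ≤ α * (j : ℝ) ^ (1 - 1 / α) * 2 ^ j * (1 - (j : ℝ) ^ (-betaC α)) := by positivity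
  linarith

end Margin

section Decay

variable {α : ℝ}

lemma mseq_succ_sub_mul_le (hα : α ∈ Set.Ioo (0 : ℝ) 1) {j : ℕ} (hj : 1 ≤ j) (J : ℕ) :
    ((mseq α (J + 1) : ℝ) - mseq α J) * (bseq α j + 1) ≤
      (((J : ℝ) + 1) / j) ^ (1 / α - 1) * 2 ^ j * (1 - (j : ℝ) ^ (-betaC α)) +
        2 * (1 / α) * ((J : ℝ) + 1) ^ (1 / α - 1) + 2 * bseq α j + 2 := by
  have hinc := (mseq_succ_sub_lt hα.1 hα.2.le J).le
  have hb := bseq_nonneg hα hj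
  have key : (1 / α) * ((J : ℝ) + 1) ^ (1 / α - 1) * (2 * bseq α j) =
      (((J : ℝ) + 1) / j) ^ (1 / α - 1) * 2 ^ j * (1 - (j : ℝ) ^ (-betaC α)) := by
    rw [two_mul_bseq, Real.div_rpow (by positivity) (by positivity),
      show 1 - 1 / α = -(1 / α - 1) by ring, Real.rpow_neg (Nat.cast_nonneg j)]
    field_simp [hα.1.ne']
  calc ((mseq α (J + 1) : ℝ) - mseq α J) * (bseq α j + 1)
      ≤ (2 * (1 / α) * ((J : ℝ) + 1) ^ (1 / α - 1) + 2) * (bseq α j + 1) := by gcongr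
    _ = _ := by linear_combination key

lemma eventually_div_le_rpow_neg_betaC :
    ∀ᶠ j : ℕ in atTop, (1 / α - 1) / j ≤ (j : ℝ) ^ (-betaC α) / 8 := by
  filter_upwards [eventually_const_le_rpow (8 * (1 / α - 1))
    (show 0 < 1 - betaC α by linarith [betaC_le_half (α := α)]), eventually_ge_atTop 1]
    with j hj hj1
  have hj0 : (0 : ℝ) < j := by exact_mod_cast hj1
  rw [show 1 - betaC α = 1 + -betaC α by ring, Real.rpow_add hj0, Real.rpow_one] at hj
  rw [div_le_iff₀ hj0]
  linarith

lemma eventually_mul_rpow_le_rpow_neg_betaC (hα : α ∈ Set.Ioo (0 : ℝ) 1) :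
    ∀ᶠ j : ℕ in atTop, α * (j : ℝ) ^ (1 - 1 / α) ≤ (j : ℝ) ^ (-betaC α) / 4 := by
  have hγ : 0 < 1 / α - 1 - betaC α := by
    linarith [betaC_le hα, betaC_pos hα]
  filter_upwards [eventually_const_le_rpow (4 * α) hγ, eventually_ge_atTop 1] with j hj hj1
  have hj0 : (0 : ℝ) < j := by exact_mod_cast hj1
  have := mul_le_mul_of_nonneg_right hj (Real.rpow_nonneg hj0.le (1 - 1 / α))
  rw [← Real.rpow_add hj0, show 1 / α - 1 - betaC α + (1 - 1 / α) = -betaC α by ring] at this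
  linarith

lemma eventually_mul_increment_le_two_pow (hα : α ∈ Set.Ioo (0 : ℝ) 1) :
    ∀ᶠ j : ℕ in atTop,
      j * (2 * (1 / α) * ((j : ℝ) + 1) ^ (1 / α - 1) + 2 + 2 * (j : ℝ) ^ 2) ≤ 2 ^ j / 16 := by
  have hp := one_le_one_div hα.1 hα.2.le
  filter_upwards [eventually_mul_rpow_le_two_pow (2 * (1 / α) * 2 ^ (1 / α - 1) + 4) (1 / α + 2)
    (show (0 : ℝ) < 1 / 16 by norm_num), eventually_ge_atTop 1] with j hj hj1
  have hj1' : (1 : ℝ) ≤ j := by exact_mod_cast hj1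
  have hj0 : (0 : ℝ) ≤ j := by linarith
  have hle : ∀ q : ℝ, q ≤ 1 / α + 2 → (j : ℝ) ^ q ≤ (j : ℝ) ^ (1 / α + 2) :=
    fun q hq => Real.rpow_le_rpow_of_exponent_le hj1' hq
  have hsucc : ((j : ℝ) + 1) ^ (1 / α - 1) ≤ 2 ^ (1 / α - 1) * (j : ℝ) ^ (1 / α - 1) := by
    rw [← Real.mul_rpow zero_le_two hj0]
    exact Real.rpow_le_rpow (by linarith) (by linarith) (by linarith)
  have hpow : (j : ℝ) * (j : ℝ) ^ (1 / α - 1) ≤ (j : ℝ) ^ (1 / α + 2) := by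
    rw [mul_comm, ← Real.rpow_add_one (by linarith)]
    exact hle _ (by linarith)
  have h1 := hle 1 (by linarith)
  have h3 := hle 3 (by linarith)
  rw [Real.rpow_one] at h1
  rw [show (3 : ℝ) = (3 : ℕ) by norm_num, Real.rpow_natCast] at h3
  have hpos : 0 ≤ 2 * (1 / α) := by have := hα.1; positivity
  have h2 := mul_le_mul_of_nonneg_left (mul_le_mul_of_nonneg_left hsucc hj0) hpos
  have h2' := mul_le_mul_of_nonneg_left hpow
    (mul_nonneg hpos (Real.rpow_nonneg zero_le_two (1 / α - 1)))
  nlinarith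

lemma eventually_mseq_succ_sub_mul_add_le (hα : α ∈ Set.Ioo (0 : ℝ) 1) :
    ∀ᶠ j : ℕ in atTop,
      ((mseq α (j + 1) : ℝ) - mseq α j) * (bseq α j + 1) + 2 * (j : ℝ) ^ 2 ≤ 2 ^ j := by
  filter_upwards [eventually_ge_atTop 1, eventually_div_le_rpow_neg_betaC (α := α),
    eventually_mul_rpow_le_rpow_neg_betaC hα, eventually_mul_increment_le_two_pow hα]
    with j hj hdiv hmul hinc
  have hj0 : (0 : ℝ) < j := by exact_mod_cast hj
  have hT : (0 : ℝ) < 2 ^ j := by positivity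
  have hβ1 := rpow_neg_betaC_le_one hα hj
  have hγ : 0 ≤ 1 / α - 1 := sub_nonneg.2 (one_le_one_div hα.1 hα.2.le)
  have hratio : (((j : ℝ) + 1) / j) ^ (1 / α - 1) ≤ 1 + 2 * ((1 / α - 1) / j) := by
    calc (((j : ℝ) + 1) / j) ^ (1 / α - 1) ≤ Real.exp ((1 / α - 1) / j) ^ 1 := by
          exact_mod_cast div_rpow_le_exp_pow hj0 hγ 1
      _ ≤ 1 + 2 * ((1 / α - 1) / j) := by
          rw [pow_one]; exact exp_le_one_add_two_mul (by positivity) (by linarith)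
  have hjβ : 1 ≤ (j : ℝ) * (j : ℝ) ^ (-betaC α) := by
    rw [← Real.rpow_one_add' hj0.le (by linarith [betaC_le_half (α := α)])]
    exact Real.one_le_rpow (by exact_mod_cast hj) (by linarith [betaC_le_half (α := α)])
  have hinc' : 2 * (1 / α) * ((j : ℝ) + 1) ^ (1 / α - 1) + 2 + 2 * (j : ℝ) ^ 2 ≤
      (j : ℝ) ^ (-betaC α) * 2 ^ j / 2 := by
    nlinarith
  have hlead : (((j : ℝ) + 1) / j) ^ (1 / α - 1) * 2 ^ j * (1 - (j : ℝ) ^ (-betaC α)) ≤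
      2 ^ j * (1 - (j : ℝ) ^ (-betaC α)) + (j : ℝ) ^ (-betaC α) / 4 * 2 ^ j := by
    calc (((j : ℝ) + 1) / j) ^ (1 / α - 1) * 2 ^ j * (1 - (j : ℝ) ^ (-betaC α))
        ≤ (1 + 2 * ((1 / α - 1) / j)) * 2 ^ j * (1 - (j : ℝ) ^ (-betaC α)) := by
          gcongr
      _ = 2 ^ j * (1 - (j : ℝ) ^ (-betaC α)) +
            2 * ((1 / α - 1) / j) * 2 ^ j * (1 - (j : ℝ) ^ (-betaC α)) := by ring
      _ ≤ 2 ^ j * (1 - (j : ℝ) ^ (-betaC α)) + (j : ℝ) ^ (-betaC α) / 4 * 2 ^ j * 1 := by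
          gcongr <;> linarith [Real.rpow_nonneg hj0.le (-betaC α)]
      _ = _ := by ring
  have hb : 2 * bseq α j ≤ (j : ℝ) ^ (-betaC α) / 4 * 2 ^ j :=
    (two_mul_bseq_le hα hj).trans (by gcongr)
  linarith [mseq_succ_sub_mul_le hα hj j]

lemma eventually_mseq_succ_sub_mul_le_two_pow (hα : α ∈ Set.Ioo (0 : ℝ) 1) :
    ∀ᶠ j : ℕ in atTop, ∀ J, j < J →
      ((mseq α (J + 1) : ℝ) - mseq α J) * (bseq α j + 1) ≤ 2 ^ J := by
  filter_upwards [eventually_ge_atTop 1, eventually_div_le_rpow_neg_betaC (α := α),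
    eventually_mul_rpow_le_rpow_neg_betaC hα,
    eventually_forall_ge_atTop.2 (eventually_mul_increment_le_two_pow hα)]
    with j hj hdiv hmul hinc J hJ
  obtain ⟨d, rfl⟩ : ∃ d, J = j + (d + 1) := ⟨J - j - 1, by omega⟩
  have hj0 : (0 : ℝ) < j := by exact_mod_cast hj
  have hT : (0 : ℝ) < 2 ^ j := by positivity
  have hβ1 := rpow_neg_betaC_le_one hα hj
  have hβ0 : 0 ≤ (j : ℝ) ^ (-betaC α) := Real.rpow_nonneg hj0.le _
  have hγ : 0 ≤ 1 / α - 1 := sub_nonneg.2 (one_le_one_div hα.1 hα.2.le)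
  have hsplit : (2 : ℝ) ^ (j + (d + 1)) = 2 ^ j * 2 ^ (d + 1) := pow_add _ _ _
  have hratio : (((j + (d + 1) : ℕ) + 1 : ℝ) / j) ^ (1 / α - 1) ≤ 25 / 32 * 2 ^ (d + 1) := by
    have hexp : Real.exp ((1 / α - 1) / j) ≤ 5 / 4 := by
      linarith [exp_le_one_add_two_mul (by positivity) (by linarith : (1 / α - 1) / j ≤ 1 / 2)]
    calc (((j + (d + 1) : ℕ) + 1 : ℝ) / j) ^ (1 / α - 1)
        ≤ Real.exp ((1 / α - 1) / j) ^ (d + 2) := by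
          exact_mod_cast div_rpow_le_exp_pow hj0 hγ (d + 2)
      _ ≤ (5 / 4) ^ 2 * (5 / 4) ^ d := by rw [← pow_add, add_comm]; gcongr
      _ ≤ (5 / 4) ^ 2 * 2 ^ d := by gcongr; norm_num
      _ = 25 / 32 * 2 ^ (d + 1) := by ring
  have hlead : (((j + (d + 1) : ℕ) + 1 : ℝ) / j) ^ (1 / α - 1) * 2 ^ j *
      (1 - (j : ℝ) ^ (-betaC α)) ≤ 25 / 32 * 2 ^ (j + (d + 1)) := by
    rw [hsplit]
    calc (((j + (d + 1) : ℕ) + 1 : ℝ) / j) ^ (1 / α - 1) * 2 ^ j * (1 - (j : ℝ) ^ (-betaC α))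
        ≤ 25 / 32 * 2 ^ (d + 1) * 2 ^ j * 1 := by gcongr; linarith
      _ = 25 / 32 * (2 ^ j * 2 ^ (d + 1)) := by ring
  have hb : 2 * bseq α j ≤ 2 ^ (j + (d + 1)) / 8 := by
    have h2 : (2 : ℝ) ≤ 2 ^ (d + 1) := le_self_pow₀ one_le_two (by omega)
    have : 2 * bseq α j ≤ 1 / 4 * 2 ^ j := (two_mul_bseq_le hα hj).trans (by gcongr; linarith)
    rw [hsplit]
    nlinarith
  have htail : 2 * (1 / α) * (((j + (d + 1) : ℕ) : ℝ) + 1) ^ (1 / α - 1) + 2 ≤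
      2 ^ (j + (d + 1)) / 16 := by
    have hJ1 : (1 : ℝ) ≤ ((j + (d + 1) : ℕ) : ℝ) := by exact_mod_cast (by omega : 1 ≤ j + (d + 1))
    have hpos : 0 ≤ 2 * (1 / α) * (((j + (d + 1) : ℕ) : ℝ) + 1) ^ (1 / α - 1) := by
      have := hα.1; positivity
    nlinarith [hinc (j + (d + 1)) (by omega)]
  linarith [mseq_succ_sub_mul_le hα hj (j + (d + 1)),
    (by positivity : (0 : ℝ) < 2 ^ (j + (d + 1)))]

lemma eventually_mseq_sub_mul_add_le (hα : α ∈ Set.Ioo (0 : ℝ) 1) :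
    ∀ᶠ j : ℕ in atTop, ∀ J, j < J →
      ((mseq α J : ℝ) - mseq α j) * (bseq α j + 1) + 2 * (j : ℝ) ^ 2 + 2 ^ j ≤ 2 ^ J := by
  filter_upwards [eventually_mseq_succ_sub_mul_add_le hα,
    eventually_mseq_succ_sub_mul_le_two_pow hα] with j hbase hstep J hJ
  induction J, (hJ : j + 1 ≤ J) using Nat.le_induction with
  | base => rw [pow_succ (2 : ℝ) j]; linarith
  | succ J hJ ih =>
    rw [pow_succ (2 : ℝ) J]
    linarith [hstep J hJ]

lemma eventually_sum_cseq_mul_exp_le (hα : α ∈ Set.Ioo (0 : ℝ) 1) :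
    ∀ᶠ j : ℕ in atTop, ∀ n,
      ∑ i ∈ Ioc (mseq α j) n, cseq α i * Real.exp (i * bseq α j) ≤
        cseq α (mseq α j) * Real.exp (mseq α j * bseq α j) * Real.exp (-(j : ℝ) ^ 2) ^ 2 := by
  filter_upwards [eventually_mseq_sub_mul_add_le hα, eventually_ge_atTop 1] with j hgap hj n
  set m := mseq α j
  set b := bseq α j
  set D := cseq α m * Real.exp (m * b) * Real.exp (-(j : ℝ) ^ 2) ^ 2
  have hb := bseq_nonneg hα hj
  have hterm : ∀ i ∈ Ioc m n, cseq α i * Real.exp (i * b) ≤ D * Real.exp (-((i : ℝ) - m)) := by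
    intro i hi
    have hJ := lt_blockIdx hα.1 hα.2.le (mem_Ioc.1 hi).1
    have hiJ : (i : ℝ) ≤ mseq α (blockIdx α i) := by
      exact_mod_cast le_mseq_blockIdx hα.1 hα.2.le i
    have hgapi := hgap _ hJ
    have hmono : ((i : ℝ) - m) * (b + 1) ≤ ((mseq α (blockIdx α i) : ℝ) - m) * (b + 1) := by
      gcongr
    have hcm : cseq α m = Real.exp (-2 ^ j) := cseq_mseq hα.1 hα.2.le j
    calc cseq α i * Real.exp (i * b) = Real.exp (-2 ^ blockIdx α i + i * b) := by
          rw [cseq, Real.exp_add]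
      _ ≤ Real.exp (-2 ^ j + m * b + 2 * -(j : ℝ) ^ 2 + -((i : ℝ) - m)) :=
          Real.exp_le_exp.2 (by nlinarith)
      _ = D * Real.exp (-((i : ℝ) - m)) := by
          simp only [D, hcm, Real.exp_add, ← Real.exp_nat_mul]
          push_cast
          ring
  calc ∑ i ∈ Ioc m n, cseq α i * Real.exp (i * b)
      ≤ ∑ i ∈ Ioc m n, D * Real.exp (-((i : ℝ) - m)) := sum_le_sum hterm
    _ ≤ D := by
        rw [← mul_sum]
        have := cseq_pos (α := α) m
        exact mul_le_of_le_one_right (by positivity) (sum_Ioc_exp_neg_sub_le_one m n)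

end Decay

section Probability

variable {Ω : Type*} [MeasurableSpace Ω] {μ : Measure Ω}

lemma one_sub_le_measureReal_lt [IsProbabilityMeasure μ] {X Z : Ω → ℝ} (hX0 : ∀ ω, 0 ≤ X ω)
    (hX : Integrable X μ) {t : ℝ} (ht : 0 < t) :
    1 - (∫ ω, X ω ∂μ) / t - μ.real {ω | Z ω ≤ t} ≤ μ.real {ω | X ω < Z ω} := by
  have hmarkov : μ.real {ω | t ≤ X ω} ≤ (∫ ω, X ω ∂μ) / t := by
    rw [le_div_iff₀ ht, mul_comm]
    exact mul_meas_ge_le_integral_of_nonneg (ae_of_all μ hX0) hX t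
  have hcover : Set.univ ⊆ {ω | X ω < Z ω} ∪ ({ω | t ≤ X ω} ∪ {ω | Z ω ≤ t}) := by
    intro ω _
    by_cases h : t ≤ X ω
    · exact Or.inr (Or.inl h)
    · by_cases h' : Z ω ≤ t
      · exact Or.inr (Or.inr h')
      · exact Or.inl (show X ω < Z ω by linarith [not_le.1 h, not_le.1 h'])
  have h1 := measureReal_mono (μ := μ) hcover
  have h2 := measureReal_union_le (μ := μ) {ω | X ω < Z ω} ({ω | t ≤ X ω} ∪ {ω | Z ω ≤ t})
  have h3 := measureReal_union_le (μ := μ) {ω | t ≤ X ω} {ω | Z ω ≤ t}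
  rw [probReal_univ] at h1
  linarith

lemma integral_sum_abs_mul_le {ε : ℕ → Ω → ℝ} (hint : ∀ k, Integrable (ε k) μ)
    (hmean : ∀ k, ∫ ω, |ε k ω| ∂μ ≤ 1) (S : Finset ℕ) {w : ℕ → ℝ} (hw : ∀ i, 0 ≤ w i) :
    ∫ ω, ∑ i ∈ S, |ε i ω| * w i ∂μ ≤ ∑ i ∈ S, w i := by
  rw [integral_finsetSum _ fun i _ => (hint i).abs.mul_const _]
  refine sum_le_sum fun i _ => ?_
  rw [integral_mul_const]
  exact mul_le_of_le_one_left (hw i) (hmean i)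

lemma one_sub_mul_le_measureReal_forall_lt [IsProbabilityMeasure μ] {ε : ℕ → Ω → ℝ}
    (hint : ∀ k, Integrable (ε k) μ) (hmean : ∀ k, ∫ ω, |ε k ω| ∂μ ≤ 1) {C₀ : ℝ}
    (hanti : ∀ k, ∀ t : ℝ, 0 ≤ t → (μ {ω | |ε k ω| ≤ t}).toReal ≤ C₀ * t)
    {w : ℕ → ℝ} (hw : ∀ i, 0 < w i) {m : ℕ} {S : Finset ℕ} (hS : ∀ i ∈ S, m ≤ i) {b δ : ℝ}
    (hδ : 0 < δ) (hsum : ∑ i ∈ S, w i * Real.exp (i * b) ≤ w m * Real.exp (m * b) * δ ^ 2) :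
    1 - (1 + 2 * C₀) * δ ≤ μ.real {ω | ∀ s : ℝ, s ≤ b →
      0 < w m * Real.exp (m * s) * |ε m ω| / 2 - ∑ i ∈ S, |ε i ω| * w i * Real.exp (i * s)} := by
  set X : Ω → ℝ := fun ω => ∑ i ∈ S, |ε i ω| * (w i * Real.exp (i * b))
  set Z : Ω → ℝ := fun ω => w m * Real.exp (m * b) * |ε m ω| / 2
  have hwm : 0 < w m * Real.exp (m * b) := mul_pos (hw m) (Real.exp_pos _)
  have hX0 : ∀ ω, 0 ≤ X ω := fun ω =>
    sum_nonneg fun i _ => mul_nonneg (abs_nonneg _) (mul_nonneg (hw i).le (Real.exp_pos _).le)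
  have hXint : Integrable X μ := integrable_finsetSum _ fun i _ => (hint i).abs.mul_const _
  have hEX : (∫ ω, X ω ∂μ) / (w m * Real.exp (m * b) * δ) ≤ δ := by
    rw [div_le_iff₀ (by positivity)]
    refine (integral_sum_abs_mul_le hint hmean S fun i => ?_).trans (hsum.trans_eq (by ring))
    exact mul_nonneg (hw i).le (Real.exp_pos _).le
  have hZ : μ.real {ω | Z ω ≤ w m * Real.exp (m * b) * δ} ≤ C₀ * (2 * δ) := by
    refine le_of_eq_of_le (congrArg μ.real (Set.ext fun ω => ?_)) (hanti m _ (by positivity))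
    simp only [Z, Set.mem_ofPred_eq]
    constructor <;> intro h <;> nlinarith
  have hevent : {ω | X ω < Z ω} ⊆ {ω | ∀ s : ℝ, s ≤ b →
      0 < w m * Real.exp (m * s) * |ε m ω| / 2 - ∑ i ∈ S, |ε i ω| * w i * Real.exp (i * s)} := by
    intro ω hω s hs
    have hbound : ∑ i ∈ S, |ε i ω| * w i * Real.exp (i * b) <
        w m * |ε m ω| / 2 * Real.exp (m * b) :=
      calc ∑ i ∈ S, |ε i ω| * w i * Real.exp (i * b) = X ω := sum_congr rfl fun i _ => by ring
        _ < Z ω := hω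
        _ = w m * |ε m ω| / 2 * Real.exp (m * b) := by ring
    have h := sum_mul_exp_lt_of_le hS (fun i _ => mul_nonneg (abs_nonneg _) (hw i).le) hbound hs
    rw [sub_pos]
    exact h.trans_eq (by ring)
  calc 1 - (1 + 2 * C₀) * δ ≤ 1 - (∫ ω, X ω ∂μ) / (w m * Real.exp (m * b) * δ) -
        μ.real {ω | Z ω ≤ w m * Real.exp (m * b) * δ} := by linarith
    _ ≤ μ.real {ω | X ω < Z ω} := one_sub_le_measureReal_lt hX0 hXint (by positivity)
    _ ≤ _ := measureReal_mono hevent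

end Probability

lemma one_sub_mul_exp_neg_sq_nonpos {j j₀ : ℕ} (hj : j ≤ j₀) {C : ℝ}
    (hC : Real.exp ((j₀ : ℝ) ^ 2) ≤ C) : 1 - C * Real.exp (-(j : ℝ) ^ 2) ≤ 0 := by
  have hsq : (j : ℝ) ^ 2 ≤ (j₀ : ℝ) ^ 2 := by gcongr
  have h1 : Real.exp ((j₀ : ℝ) ^ 2) * Real.exp (-(j : ℝ) ^ 2) ≥ 1 := by
    rw [← Real.exp_add]
    exact Real.one_le_exp (by linarith)
  nlinarith [Real.exp_pos (-(j : ℝ) ^ 2)]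

theorem statement12_general (α : ℝ) (hα : α ∈ Set.Ioo (0 : ℝ) 1)
    {Ω : Type*} [MeasurableSpace Ω] (μ : Measure Ω) [IsProbabilityMeasure μ]
    (ε : ℕ → Ω → ℝ)
    (hint : ∀ k, Integrable (ε k) μ)
    (hmean : ∀ k, ∫ ω, |ε k ω| ∂μ ≤ 1)
    (C₀ : ℝ)
    (hanti : ∀ k, ∀ t : ℝ, 0 ≤ t → (μ {ω | |ε k ω| ≤ t}).toReal ≤ C₀ * t) :
    ∃ C > (0 : ℝ), ∃ c > (0 : ℝ), ∀ n j : ℕ, 1 ≤ j → mseq α j ≤ n →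
      1 - C * Real.exp (-c * (j : ℝ) ^ 2) ≤
        (μ {ω | ∀ s : ℝ, s ≤ bseq α j →
          0 < cseq α (mseq α j) * Real.exp ((mseq α j : ℝ) * s) * |ε (mseq α j) ω| / 2 -
            ∑ i ∈ Finset.Ioc (mseq α j) n,
              |ε i ω| * cseq α i * Real.exp ((i : ℝ) * s)}).toReal := by
  obtain ⟨j₀, hj₀⟩ := eventually_atTop.1 (eventually_sum_cseq_mul_exp_le hα)
  refine ⟨max (1 + 2 * C₀) (Real.exp ((j₀ : ℝ) ^ 2)), lt_max_of_lt_right (Real.exp_pos _),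
    1, one_pos, fun n j _ _ => ?_⟩
  rw [neg_one_mul]
  rcases le_or_gt j₀ j with hj | hj
  · calc 1 - max (1 + 2 * C₀) (Real.exp ((j₀ : ℝ) ^ 2)) * Real.exp (-(j : ℝ) ^ 2)
        ≤ 1 - (1 + 2 * C₀) * Real.exp (-(j : ℝ) ^ 2) := by gcongr; exact le_max_left _ _
      _ ≤ _ := one_sub_mul_le_measureReal_forall_lt hint hmean hanti cseq_pos
          (fun i hi => (mem_Ioc.1 hi).1.le) (Real.exp_pos _) (hj₀ j hj n)
  · exact (one_sub_mul_exp_neg_sq_nonpos hj.le (le_max_right _ _)).trans ENNReal.toReal_nonneg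

/-- With probability at least `1 - C exp(-c j²)`:
`inf_{s ≤ b_j} ((1/2) c_(m_j) e^(m_j s) |ε_(m_j)| - ∑_{m_j < i ≤ n} |ε_i| c_i e^(i s)) > 0`. -/
theorem statement12 (α : ℝ) (hα : α ∈ Set.Ioo (0 : ℝ) 1)
    {Ω : Type*} [MeasurableSpace Ω] (μ : Measure Ω) [IsProbabilityMeasure μ]
    (ε : ℕ → Ω → ℝ) (hmeas : ∀ k, Measurable (ε k))
    (hindep : iIndepFun ε μ)
    (hident : ∀ k, IdentDistrib (ε k) (ε 0) μ μ)
    (hint : ∀ k, Integrable (ε k) μ)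
    (hmean : ∀ k, ∫ ω, |ε k ω| ∂μ ≤ 1)
    (C₀ : ℝ) (hC₀ : 0 < C₀)
    (hanti : ∀ k, ∀ t : ℝ, 0 ≤ t → (μ {ω | |ε k ω| ≤ t}).toReal ≤ C₀ * t) :
    ∃ C > (0 : ℝ), ∃ c > (0 : ℝ), ∀ n j : ℕ, 1 ≤ j → mseq α j ≤ n →
      1 - C * Real.exp (-c * (j : ℝ) ^ 2) ≤
        (μ {ω | ∀ s : ℝ, s ≤ bseq α j →
          0 < cseq α (mseq α j) * Real.exp ((mseq α j : ℝ) * s) * |ε (mseq α j) ω| / 2 -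
            ∑ i ∈ Finset.Ioc (mseq α j) n,
              |ε i ω| * cseq α i * Real.exp ((i : ℝ) * s)}).toReal :=
  statement12_general α hα μ ε hint hmean C₀ hanti
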